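/- Sparse Hessian recovery by coloring: let H be a symmetric n×n matrix with known sparsity pattern, and suppose the columns of H are partitioned into C color classes such that no two columns in the same class have a nonzero in a common row. Then all nonzero entries of H are determined by the C matrix-vector products H·v_c, where v_c is the indicator vector of color class c. -/
import Mathlib

open Matrix

lemma coloring_read_off {nn C : ℕ} (M : Matrix (Fin nn) (Fin nn) ℝ)
    (color : Fin nn → Fin C) (i j : Fin nn)
    (h : ∀ l, l ≠ j → color l = color j → M i l = 0) :
    M.mulVec (fun l => if color l = color j then 1 else 0) i = M i j := by
  simp only [mulVec, dotProduct, mul_ite, mul_one, mul_zero]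
  rw [Finset.sum_eq_single j]
  · simp
  · intro l _ hl
    by_cases hc : color l = color j
    · simp [hc, h l hl hc]
    · simp [hc]
  · simp

/-- Sparse Hessian recovery by coloring: if the columns of a symmetric matrix `H` are
colored so that no two columns of the same color have a nonzero in a common row, then
every nonzero entry of `H` can be read off from the `C` matrix-vector products with the
color-indicator vectors, and these products determine all entries of any matrix with the
same (known) sparsity pattern. -/
theorem sparse_hessian_coloring (nn C : ℕ) (H : Matrix (Fin nn) (Fin nn) ℝ)
    (hsymm : Hᵀ = H) (color : Fin nn → Fin C)
    (hcolor : ∀ i j j', j ≠ j' → color j = color j' → ¬(H i j ≠ 0 ∧ H i j' ≠ 0)) :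
    (∀ i j, H i j ≠ 0 →
      H i j = H.mulVec (fun l => if color l = color j then 1 else 0) i) ∧
    (∀ H' : Matrix (Fin nn) (Fin nn) ℝ,
      (∀ i j, H i j = 0 → H' i j = 0) →
      (∀ c : Fin C, H'.mulVec (fun l => if color l = c then 1 else 0) =
        H.mulVec (fun l => if color l = c then 1 else 0)) →
      H' = H) := by
  have key : ∀ i j l, l ≠ j → color l = color j → H i j ≠ 0 → H i l = 0 := by
    intro i j l hlj hc hj
    by_contra hl
    exact hcolor i l j hlj hc ⟨hl, hj⟩
  constructor
  · intro i j hij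
    exact (coloring_read_off H color i j (fun l hl hc => key i j l hl hc hij)).symm
  · intro H' hsp hprod
    ext i j
    by_cases hij : H i j = 0
    · rw [hsp i j hij, hij]
    · have h1 := coloring_read_off H color i j (fun l hl hc => key i j l hl hc hij)
      have h2 := coloring_read_off H' color i j
        (fun l hl hc => hsp i l (key i j l hl hc hij))
      rw [← h1, ← h2, congrFun (hprod (color j)) i]
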